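/- Let N ≥ 3 be an integer, β ∈ (0,1], and 1 ≤ k ≤ N−2. Consider the star graph S_N with a vaccinated set V' ⊆ V of size k: the vertices of V' and all incident edges are removed, the patient zero is uniform over all N vertices of S_N, and the epidemic final size is 0 if the patient zero lies in V' and otherwise equals the number of vertices reachable from the patient zero in the open subgraph (bond percolation with parameter β) of S_N − V'. If the center belongs to V', the expected epidemic final size equals (N−k)/N; if the center does not belong to V', it equals ((N−k)/N)·(1 + 2(N−k−1)β/(N−k) + (N−k−1)(N−k−2)β²/(N−k)), which is strictly greater than (N−k)/N. Hence among vaccinated sets of size k, the expected epidemic final size is minimized exactly by the sets containing the center. -/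

import Mathlib

open scoped Classical

noncomputable section

/-- Probability weight of an edge configuration in bond percolation with parameter `β`:
each edge is independently open (`true`) with probability `β` and closed with
probability `1 - β`. -/
def configWeight {ι : Type*} [Fintype ι] (β : ℝ) (ω : ι → Bool) : ℝ :=
  ∏ e : ι, if ω e then β else 1 - β

/-- Two vertices are adjacent in the open subgraph if some open edge joins them. -/
def OpenAdj {ι V : Type*} (E : ι → V × V) (ω : ι → Bool) (a b : V) : Prop :=
  ∃ e : ι, ω e = true ∧ (E e = (a, b) ∨ E e = (b, a))

/-- Number of vertices reachable from `v` in the open subgraph (including `v` itself). -/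
def reachCount {ι V : Type*} [Fintype V] (E : ι → V × V) (ω : ι → Bool) (v : V) : ℕ :=
  (Finset.univ.filter fun u => Relation.ReflTransGen (OpenAdj E ω) v u).card

/-- Expected epidemic final size (expected number of vertices reachable from the
patient zero `v` in the open subgraph) under bond percolation with parameter `β`. -/
def expectedEFS {ι V : Type*} [Fintype ι] [Fintype V] (β : ℝ) (E : ι → V × V) (v : V) : ℝ :=
  ∑ ω : ι → Bool, configWeight β ω * (reachCount E ω v : ℝ)

/-- The star graph `S_N`: vertex `0` is the center, vertices `1,…,N-1` are the leaves,
and each edge joins the center to one leaf. -/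
def starEdge (N : ℕ) : Fin (N - 1) → Fin N × Fin N :=
  fun i => (⟨0, by have := i.2; omega⟩, ⟨i.1 + 1, by have := i.2; omega⟩)

/-- Open adjacency in the graph with the vaccinated vertices (and all incident edges)
removed: both endpoints must be unvaccinated and joined by an open edge. -/
def OpenAdjVacc {ι V : Type*} (E : ι → V × V) (vac : V → Prop) (ω : ι → Bool)
    (a b : V) : Prop :=
  ¬ vac a ∧ ¬ vac b ∧ OpenAdj E ω a b

/-- Epidemic final size with vaccinated set: `0` if the patient zero `v` is vaccinated,
otherwise the number of vertices reachable from `v` in the open subgraph of the graph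
with the vaccinated vertices removed. -/
def efsVacc {ι V : Type*} [Fintype V] (E : ι → V × V) (vac : V → Prop)
    (ω : ι → Bool) (v : V) : ℕ :=
  if vac v then 0
  else (Finset.univ.filter fun u => Relation.ReflTransGen (OpenAdjVacc E vac ω) v u).card

/-- Expected epidemic final size with vaccinated set `vac`, with the patient zero
uniform over all vertices, under bond percolation with parameter `β`. -/
def expectedEFSVacc {ι V : Type*} [Fintype ι] [Fintype V] (β : ℝ) (E : ι → V × V)
    (vac : V → Prop) : ℝ :=
  (Fintype.card V : ℝ)⁻¹ *
    ∑ v : V, ∑ ω : ι → Bool, configWeight β ω * (efsVacc E vac ω v : ℝ)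

namespace Stmt13Aux

lemma univ_eq {α : Type*} (i1 i2 : Fintype α) :
    @Finset.univ α i1 = @Finset.univ α i2 := by
  cases Subsingleton.elim i1 i2; rfl

section Canon
variable {ι : Type*} [Fintype ι]

lemma sum_weight_prod₀ (β : ℝ) (S : Finset ι) :
    ∑ ω : ι → Bool, configWeight β ω * ∏ e ∈ S, (if ω e = true then (1:ℝ) else 0)
      = β ^ S.card := by
  classical
  have h1 : ∀ ω : ι → Bool, configWeight β ω * ∏ e ∈ S, (if ω e = true then (1:ℝ) else 0)
      = ∏ e : ι, ((if ω e then β else 1 - β) *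
          (if e ∈ S then (if ω e then (1:ℝ) else 0) else 1)) := by
    intro ω
    rw [Finset.prod_mul_distrib]
    congr 1
    rw [Fintype.prod_ite_mem]
  set g : ι → Bool → ℝ := fun e b => (if b then β else 1 - β) *
      (if e ∈ S then (if b then (1:ℝ) else 0) else 1) with hg
  have key : ∑ ω : ι → Bool, ∏ e : ι, g e (ω e) = ∏ e : ι, ∑ b : Bool, g e b :=
    (Fintype.prod_sum (κ := fun _ : ι => Bool) g).symm
  calc ∑ ω : ι → Bool, configWeight β ω * ∏ e ∈ S, (if ω e = true then (1:ℝ) else 0)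
      = ∑ ω : ι → Bool, ∏ e : ι, g e (ω e) := by
        exact Finset.sum_congr rfl fun ω _ => h1 ω
    _ = ∏ e : ι, ∑ b : Bool, g e b := key
    _ = ∏ e : ι, (if e ∈ S then β else 1) := by
        apply Finset.prod_congr rfl
        intro e _
        rw [hg, Fintype.sum_bool]
        by_cases he : e ∈ S <;> simp [he]
    _ = β ^ S.card := by rw [Fintype.prod_ite_mem, Finset.prod_const]

end Canon

section Gen
variable {ι : Type*} [Fintype ι] [inst : Fintype (ι → Bool)]

lemma sum_weight_prod (β : ℝ) (S : Finset ι) :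
    ∑ ω : ι → Bool, configWeight β ω * ∏ e ∈ S, (if ω e = true then (1:ℝ) else 0)
      = β ^ S.card := by
  rw [univ_eq inst (Pi.instFintype)]
  exact sum_weight_prod₀ β S

lemma sum_weight (β : ℝ) : ∑ ω : ι → Bool, configWeight β ω = 1 := by
  have := sum_weight_prod (ι := ι) β ∅
  simpa using this

lemma sum_weight_one (β : ℝ) (e : ι) :
    ∑ ω : ι → Bool, configWeight β ω * (if ω e = true then (1:ℝ) else 0) = β := by
  have := sum_weight_prod (ι := ι) β {e}
  simpa using this

lemma sum_weight_two (β : ℝ) (e f : ι) (hef : e ≠ f) :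
    ∑ ω : ι → Bool, configWeight β ω * (if (ω e = true ∧ ω f = true) then (1:ℝ) else 0)
      = β ^ 2 := by
  classical
  have h := sum_weight_prod (ι := ι) β {e, f}
  rw [Finset.card_insert_of_notMem (by simpa using hef), Finset.card_singleton] at h
  rw [← h]
  apply Finset.sum_congr rfl
  intro ω _
  congr 1
  rw [Finset.prod_pair hef]
  by_cases h1 : ω e = true <;> by_cases h2 : ω f = true <;> simp [h1, h2]

lemma expectedEFSVacc_eq {V : Type*} [Fintype V] (β : ℝ) (E : ι → V × V) (vac : V → Prop) :
    expectedEFSVacc β E vac = (Fintype.card V : ℝ)⁻¹ *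
      ∑ v : V, ∑ ω : ι → Bool, configWeight β ω * (efsVacc E vac ω v : ℝ) := by
  rw [expectedEFSVacc]
  exact congrArg _ (Finset.sum_congr rfl fun v _ => by rw [univ_eq _ inst])

end Gen

def eIdx {N : ℕ} (hN : 3 ≤ N) (u : Fin N) : Fin (N - 1) :=
  ⟨u.1 - 1, by have := u.2; omega⟩

lemma eIdx_inj {N : ℕ} (hN : 3 ≤ N) {u v : Fin N}
    (hu : u ≠ ⟨0, by have := hN; omega⟩) (hv : v ≠ ⟨0, by have := hN; omega⟩) (huv : u ≠ v) :
    eIdx hN u ≠ eIdx hN v := by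
  have hu' : u.1 ≠ 0 := fun h => hu (Fin.ext h)
  have hv' : v.1 ≠ 0 := fun h => hv (Fin.ext h)
  have huv' : u.1 ≠ v.1 := fun h => huv (Fin.ext h)
  simp only [eIdx, ne_eq, Fin.mk.injEq]
  omega

lemma adj_cases {N : ℕ} (hN : 3 ≤ N) (V' : Finset (Fin N)) (ω : Fin (N-1) → Bool)
    {a b : Fin N} (h : OpenAdjVacc (starEdge N) (· ∈ V') ω a b) :
    a ∉ V' ∧ b ∉ V' ∧
      ((a = ⟨0, by have := hN; omega⟩ ∧ b ≠ ⟨0, by have := hN; omega⟩ ∧ ω (eIdx hN b) = true) ∨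
       (b = ⟨0, by have := hN; omega⟩ ∧ a ≠ ⟨0, by have := hN; omega⟩ ∧ ω (eIdx hN a) = true)) := by
  obtain ⟨ha, hb, i, hi, hE | hE⟩ := h
  · refine ⟨ha, hb, Or.inl ?_⟩
    rw [starEdge, Prod.mk.injEq] at hE
    obtain ⟨h1, h2⟩ := hE
    have hb1 : b.1 = i.1 + 1 := by rw [← h2]
    refine ⟨h1.symm, ?_, ?_⟩
    · intro hc; rw [hc] at hb1; simp at hb1
    · have : eIdx hN b = i := by simp only [eIdx]; apply Fin.ext; simp [hb1]
      rw [this]; exact hi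
  · refine ⟨ha, hb, Or.inr ?_⟩
    rw [starEdge, Prod.mk.injEq] at hE
    obtain ⟨h1, h2⟩ := hE
    have ha1 : a.1 = i.1 + 1 := by rw [← h2]
    refine ⟨h1.symm, ?_, ?_⟩
    · intro hc; rw [hc] at ha1; simp at ha1
    · have : eIdx hN a = i := by simp only [eIdx]; apply Fin.ext; simp [ha1]
      rw [this]; exact hi

lemma adj_symm {ι V : Type*} {E : ι → V × V} {vac : V → Prop} {ω : ι → Bool}
    {a b : V} (h : OpenAdjVacc E vac ω a b) : OpenAdjVacc E vac ω b a := by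
  obtain ⟨ha, hb, e, he, hE⟩ := h
  exact ⟨hb, ha, e, he, hE.symm⟩

lemma adj_center_leaf {N : ℕ} (hN : 3 ≤ N) (V' : Finset (Fin N)) (ω : Fin (N-1) → Bool)
    (hc : (⟨0, by have := hN; omega⟩ : Fin N) ∉ V') {u : Fin N} (hu : u ∉ V')
    (huc : u ≠ ⟨0, by have := hN; omega⟩) (ho : ω (eIdx hN u) = true) :
    OpenAdjVacc (starEdge N) (· ∈ V') ω ⟨0, by have := hN; omega⟩ u := by
  refine ⟨hc, hu, eIdx hN u, ho, Or.inl ?_⟩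
  have hu1 : u.1 ≠ 0 := fun h => huc (Fin.ext h)
  rw [starEdge, Prod.mk.injEq]
  exact ⟨rfl, Fin.ext (by simp [eIdx]; omega)⟩

lemma reach_center_vacc {N : ℕ} (hN : 3 ≤ N) (V' : Finset (Fin N)) (ω : Fin (N-1) → Bool)
    (hc : (⟨0, by have := hN; omega⟩ : Fin N) ∈ V') (v u : Fin N) :
    Relation.ReflTransGen (OpenAdjVacc (starEdge N) (· ∈ V') ω) v u ↔ u = v := by
  constructor
  · intro h
    induction h with
    | refl => rfl
    | tail _ hadj ih =>
      exfalso
      obtain ⟨ha, hb, hor | hor⟩ := adj_cases hN V' ω hadj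
      · exact ha (hor.1 ▸ hc)
      · exact hb (hor.1 ▸ hc)
  · rintro rfl; exact Relation.ReflTransGen.refl

lemma reach_from_center {N : ℕ} (hN : 3 ≤ N) (V' : Finset (Fin N)) (ω : Fin (N-1) → Bool)
    (hc : (⟨0, by have := hN; omega⟩ : Fin N) ∉ V') (u : Fin N) :
    Relation.ReflTransGen (OpenAdjVacc (starEdge N) (· ∈ V') ω) ⟨0, by have := hN; omega⟩ u ↔
      u = ⟨0, by have := hN; omega⟩ ∨ (u ∉ V' ∧ u ≠ ⟨0, by have := hN; omega⟩ ∧ ω (eIdx hN u) = true) := by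
  constructor
  · intro h
    induction h with
    | refl => exact Or.inl rfl
    | tail _ hadj ih =>
      obtain ⟨ha, hb, hor | hor⟩ := adj_cases hN V' ω hadj
      · exact Or.inr ⟨hb, hor.2.1, hor.2.2⟩
      · exact Or.inl hor.1
  · rintro (rfl | ⟨hu, huc, ho⟩)
    · exact Relation.ReflTransGen.refl
    · exact Relation.ReflTransGen.single (adj_center_leaf hN V' ω hc hu huc ho)

lemma reach_from_leaf {N : ℕ} (hN : 3 ≤ N) (V' : Finset (Fin N)) (ω : Fin (N-1) → Bool)
    (hc : (⟨0, by have := hN; omega⟩ : Fin N) ∉ V') {v : Fin N} (hv : v ∉ V')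
    (hvc : v ≠ ⟨0, by have := hN; omega⟩) (u : Fin N) :
    Relation.ReflTransGen (OpenAdjVacc (starEdge N) (· ∈ V') ω) v u ↔
      u = v ∨ (ω (eIdx hN v) = true ∧ u ∉ V' ∧
        (u = ⟨0, by have := hN; omega⟩ ∨ (u ≠ ⟨0, by have := hN; omega⟩ ∧ ω (eIdx hN u) = true))) := by
  constructor
  · intro h
    induction h with
    | refl => exact Or.inl rfl
    | @tail b u _ hadj ih =>
      obtain ⟨hb, hu, hor | hor⟩ := adj_cases hN V' ω hadj
      · -- b is the center
        have hov : ω (eIdx hN v) = true := by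
          rcases ih with rfl | ⟨hov, _, _⟩
          · exact absurd hor.1 hvc
          · exact hov
        exact Or.inr ⟨hov, hu, Or.inr ⟨hor.2.1, hor.2.2⟩⟩
      · -- u is the center
        have hov : ω (eIdx hN v) = true := by
          rcases ih with rfl | ⟨hov, _, _⟩
          · exact hor.2.2
          · exact hov
        exact Or.inr ⟨hov, hu, Or.inl hor.1⟩
  · rintro (rfl | ⟨hov, hu, rfl | ⟨huc, hou⟩⟩)
    · exact Relation.ReflTransGen.refl
    · exact Relation.ReflTransGen.single (adj_symm (adj_center_leaf hN V' ω hc hv hvc hov))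
    · exact Relation.ReflTransGen.head (adj_symm (adj_center_leaf hN V' ω hc hv hvc hov))
        (Relation.ReflTransGen.single (adj_center_leaf hN V' ω hc hu huc hou))


-- cast of a filtered-count card as a real sum of indicators
lemma card_filter_real {α : Type*} [Fintype α] (p : α → Prop) :
    ((Finset.univ.filter p).card : ℝ) = ∑ u : α, (if p u then (1:ℝ) else 0) := by
  rw [Finset.card_filter]
  push_cast
  exact Finset.sum_congr rfl fun u _ => by split_ifs <;> simp

lemma valA {N k : ℕ} (hN : 3 ≤ N) (hkN : k ≤ N) (β : ℝ)
    (V' : Finset (Fin N)) (hcard : V'.card = k)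
    (hc : (⟨0, by have := hN; omega⟩ : Fin N) ∈ V') :
    expectedEFSVacc β (starEdge N) (· ∈ V') = ((N:ℝ) - k) / N := by
  rw [expectedEFSVacc_eq]
  have hefs : ∀ (ω : Fin (N-1) → Bool) (v : Fin N),
      (efsVacc (starEdge N) (· ∈ V') ω v : ℝ) = if v ∈ V' then 0 else 1 := by
    intro ω v
    rw [efsVacc]
    by_cases hv : v ∈ V'
    · simp [hv]
    · have hset : (Finset.univ.filter fun u =>
          Relation.ReflTransGen (OpenAdjVacc (starEdge N) (· ∈ V') ω) v u) = {v} := by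
        ext u
        simp [reach_center_vacc hN V' ω hc v u]
      simp [hv, hset]
  have hinner : ∀ v : Fin N,
      (∑ ω : Fin (N-1) → Bool, configWeight β ω * (efsVacc (starEdge N) (· ∈ V') ω v : ℝ))
        = if v ∈ V' then 0 else 1 := by
    intro v
    simp only [hefs]
    rw [← Finset.sum_mul, sum_weight β, one_mul]
  simp only [hinner]
  rw [Finset.sum_ite, Finset.sum_const, Finset.sum_const, smul_zero, zero_add, nsmul_eq_mul,
    mul_one]
  have hfilter : Finset.univ.filter (fun v : Fin N => ¬ v ∈ V') = V'ᶜ := by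
    ext u; simp
  rw [hfilter, Finset.card_compl, Fintype.card_fin, hcard]
  rw [Nat.cast_sub hkN]
  rw [div_eq_inv_mul]

lemma valB {N k : ℕ} (hN : 3 ≤ N) (hk2 : k ≤ N - 2) (β : ℝ)
    (V' : Finset (Fin N)) (hcard : V'.card = k)
    (hc : (⟨0, by have := hN; omega⟩ : Fin N) ∉ V') :
    expectedEFSVacc β (starEdge N) (· ∈ V') =
      (((N:ℝ) - k) + 2*((N:ℝ)-k-1)*β + ((N:ℝ)-k-1)*((N:ℝ)-k-2)*β^2) / N := by
  have hkN : k + 2 ≤ N := by omega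
  set c : Fin N := ⟨0, by have := hN; omega⟩ with hcdef
  have hcompl : c ∈ V'ᶜ := by simpa using hc
  have hcast1 : ((V'ᶜ.card - 1 : ℕ) : ℝ) = (N:ℝ) - k - 1 := by
    rw [Finset.card_compl, Fintype.card_fin, hcard, Nat.sub_sub,
      Nat.cast_sub (by omega : k + 1 ≤ N)]
    push_cast; ring
  rw [expectedEFSVacc_eq]
  -- inner expectation for v = c
  have hvcenter :
      (∑ ω : Fin (N-1) → Bool, configWeight β ω * (efsVacc (starEdge N) (· ∈ V') ω c : ℝ))
        = 1 + ((N:ℝ)-k-1)*β := by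
    have hstep : ∀ ω : Fin (N-1) → Bool,
        (efsVacc (starEdge N) (· ∈ V') ω c : ℝ) =
          ∑ u : Fin N, (if (u = c ∨ (u ∉ V' ∧ u ≠ c ∧ ω (eIdx hN u) = true))
            then (1:ℝ) else 0) := by
      intro ω
      rw [efsVacc, if_neg hc, card_filter_real]
      exact Finset.sum_congr rfl fun u _ => by
        rw [if_congr (reach_from_center hN V' ω hc u) rfl rfl]
    calc (∑ ω : Fin (N-1) → Bool, configWeight β ω * (efsVacc (starEdge N) (· ∈ V') ω c : ℝ))
        = ∑ u : Fin N, ∑ ω : Fin (N-1) → Bool, configWeight β ω *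
            (if (u = c ∨ (u ∉ V' ∧ u ≠ c ∧ ω (eIdx hN u) = true)) then (1:ℝ) else 0) := by
          simp only [hstep, Finset.mul_sum]
          exact Finset.sum_comm
      _ = ∑ u : Fin N, (if u = c then (1:ℝ) else if u ∈ V' then 0 else β) := by
          apply Finset.sum_congr rfl
          intro u _
          by_cases huc : u = c
          · subst huc
            simp only [if_pos rfl, true_or, if_true, mul_one]
            exact sum_weight β
          · by_cases hu : u ∈ V'
            · simp [huc, hu]
            · simp only [huc, hu, not_false_iff, true_and, false_or, if_neg huc, if_neg hu,
                ne_eq, not_false_eq_true]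
              exact sum_weight_one β (eIdx hN u)
      _ = 1 + ((N:ℝ)-k-1)*β := by
          rw [← Finset.add_sum_erase _ _ (Finset.mem_univ c), if_pos rfl]
          congr 1
          rw [Finset.sum_congr rfl
            (fun u hu => if_neg (Finset.ne_of_mem_erase hu) :
              ∀ u ∈ Finset.univ.erase c, _ = if u ∈ V' then (0:ℝ) else β)]
          rw [Finset.sum_ite, Finset.sum_const, Finset.sum_const, smul_zero, zero_add,
            nsmul_eq_mul]
          have hset : (Finset.univ.erase c).filter (fun u => u ∉ V') = V'ᶜ.erase c := by
            ext u
            simp only [Finset.mem_filter, Finset.mem_erase, Finset.mem_univ, and_true,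
              Finset.mem_compl, true_and]
          rw [hset, Finset.card_erase_of_mem hcompl, hcast1]
  -- inner expectation for unvaccinated leaves
  have hvleaf : ∀ v : Fin N, v ∉ V' → v ≠ c →
      (∑ ω : Fin (N-1) → Bool, configWeight β ω * (efsVacc (starEdge N) (· ∈ V') ω v : ℝ))
        = 1 + β + ((N:ℝ)-k-2)*β^2 := by
    intro v hv hvc
    have hstep : ∀ ω : Fin (N-1) → Bool,
        (efsVacc (starEdge N) (· ∈ V') ω v : ℝ) =
          ∑ u : Fin N, (if (u = v ∨ (ω (eIdx hN v) = true ∧ u ∉ V' ∧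
            (u = c ∨ (u ≠ c ∧ ω (eIdx hN u) = true)))) then (1:ℝ) else 0) := by
      intro ω
      rw [efsVacc, if_neg hv, card_filter_real]
      exact Finset.sum_congr rfl fun u _ => by
        rw [if_congr (reach_from_leaf hN V' ω hc hv hvc u) rfl rfl]
    calc (∑ ω : Fin (N-1) → Bool, configWeight β ω * (efsVacc (starEdge N) (· ∈ V') ω v : ℝ))
        = ∑ u : Fin N, ∑ ω : Fin (N-1) → Bool, configWeight β ω *
            (if (u = v ∨ (ω (eIdx hN v) = true ∧ u ∉ V' ∧
              (u = c ∨ (u ≠ c ∧ ω (eIdx hN u) = true)))) then (1:ℝ) else 0) := by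
          simp only [hstep, Finset.mul_sum]
          exact Finset.sum_comm
      _ = ∑ u : Fin N, (if u = v then (1:ℝ) else if u = c then β
            else if u ∈ V' then 0 else β^2) := by
          apply Finset.sum_congr rfl
          intro u _
          by_cases huv : u = v
          · subst huv
            simp only [if_pos rfl, true_or, if_true, mul_one]
            exact sum_weight β
          · by_cases huc : u = c
            · subst huc
              simp only [if_neg huv, if_pos rfl, huv, false_or, hc, not_false_iff,
                true_and, true_or, and_true]
              exact sum_weight_one β (eIdx hN v)
            · by_cases hu : u ∈ V'
              · simp [huv, huc, hu]
              · simp only [huv, huc, hu, not_false_iff, true_and, false_or, if_neg huv,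
                  if_neg huc, if_neg hu, ne_eq, not_false_eq_true]
                exact sum_weight_two β (eIdx hN v) (eIdx hN u)
                  (eIdx_inj hN hvc huc (fun h => huv h.symm))
      _ = 1 + β + ((N:ℝ)-k-2)*β^2 := by
          rw [← Finset.add_sum_erase _ _ (Finset.mem_univ v), if_pos rfl]
          rw [Finset.sum_congr rfl
            (fun u hu => if_neg (Finset.ne_of_mem_erase hu) :
              ∀ u ∈ Finset.univ.erase v, _ =
                if u = c then (β:ℝ) else if u ∈ V' then 0 else β^2)]
          have hcmem : c ∈ Finset.univ.erase v :=
            Finset.mem_erase.2 ⟨fun h => hvc h.symm, Finset.mem_univ c⟩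
          rw [← Finset.add_sum_erase _ _ hcmem, if_pos rfl]
          rw [Finset.sum_congr rfl
            (fun u hu => if_neg (Finset.ne_of_mem_erase hu) :
              ∀ u ∈ (Finset.univ.erase v).erase c, _ = if u ∈ V' then (0:ℝ) else β^2)]
          rw [Finset.sum_ite, Finset.sum_const, Finset.sum_const, smul_zero, zero_add,
            nsmul_eq_mul]
          have hset : ((Finset.univ.erase v).erase c).filter (fun u => u ∉ V')
              = (V'ᶜ.erase v).erase c := by
            ext u
            simp only [Finset.mem_filter, Finset.mem_erase, Finset.mem_univ, and_true,
              Finset.mem_compl, true_and]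
            tauto
          have hvmem : v ∈ V'ᶜ := by simpa using hv
          have hcmem2 : c ∈ V'ᶜ.erase v :=
            Finset.mem_erase.2 ⟨fun h => hvc h.symm, hcompl⟩
          rw [hset, Finset.card_erase_of_mem hcmem2, Finset.card_erase_of_mem hvmem]
          have : ((V'ᶜ.card - 1 - 1 : ℕ) : ℝ) = (N:ℝ) - k - 2 := by
            rw [Finset.card_compl, Fintype.card_fin, hcard, Nat.sub_sub, Nat.sub_sub,
              Nat.cast_sub (by omega : k + (1 + 1) ≤ N)]
            push_cast; ring
          rw [this]
          ring
  -- the total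
  have hF : ∀ v : Fin N,
      (∑ ω : Fin (N-1) → Bool, configWeight β ω * (efsVacc (starEdge N) (· ∈ V') ω v : ℝ))
        = if v ∈ V' then 0 else if v = c then 1 + ((N:ℝ)-k-1)*β
            else 1 + β + ((N:ℝ)-k-2)*β^2 := by
    intro v
    by_cases hv : v ∈ V'
    · simp [efsVacc, hv]
    · by_cases hvc : v = c
      · subst hvc; rw [if_neg hv, if_pos rfl]; exact hvcenter
      · rw [if_neg hv, if_neg hvc]; exact hvleaf v hv hvc
  simp only [hF]
  rw [Finset.sum_ite, Finset.sum_const, smul_zero, zero_add]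
  have hfilter : Finset.univ.filter (fun v : Fin N => ¬ v ∈ V') = V'ᶜ := by
    ext u; simp
  rw [hfilter]
  rw [← Finset.add_sum_erase _ _ hcompl, if_pos rfl]
  rw [Finset.sum_congr rfl
    (fun u hu => if_neg (Finset.ne_of_mem_erase hu) :
      ∀ u ∈ V'ᶜ.erase c, _ = 1 + β + ((N:ℝ)-k-2)*β^2)]
  rw [Finset.sum_const, nsmul_eq_mul, Finset.card_erase_of_mem hcompl, hcast1]
  rw [Fintype.card_fin, div_eq_inv_mul]
  congr 1
  ring

end Stmt13Aux

/-- Star graph `S_N` (`N ≥ 3`), bond percolation with `β ∈ (0,1]`,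
vaccinated set `V'` of size `k` (`1 ≤ k ≤ N−2`) removed, patient zero uniform over all
`N` vertices (final size `0` on vaccinated patient zeros). If the center belongs to
`V'` the expected epidemic final size equals `(N−k)/N`; if not, it equals
`((N−k)/N)·(1 + 2(N−k−1)β/(N−k) + (N−k−1)(N−k−2)β²/(N−k))`, which is strictly greater
than `(N−k)/N`. Hence among vaccinated sets of size `k`, the expected epidemic final
size is minimized exactly by the sets containing the center. -/
theorem stmt13 (N k : ℕ) (hN : 3 ≤ N) (hk1 : 1 ≤ k) (hk2 : k ≤ N - 2)
    (β : ℝ) (hβ : β ∈ Set.Ioc (0 : ℝ) 1)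
    (V' : Finset (Fin N)) (hcard : V'.card = k) :
    (((⟨0, by omega⟩ : Fin N) ∈ V' →
        expectedEFSVacc β (starEdge N) (· ∈ V') = ((N : ℝ) - k) / N) ∧
     ((⟨0, by omega⟩ : Fin N) ∉ V' →
        expectedEFSVacc β (starEdge N) (· ∈ V') =
          ((N : ℝ) - k) / N *
            (1 + 2 * ((N : ℝ) - k - 1) * β / ((N : ℝ) - k)
               + ((N : ℝ) - k - 1) * ((N : ℝ) - k - 2) * β ^ 2 / ((N : ℝ) - k)) ∧
        ((N : ℝ) - k) / N < expectedEFSVacc β (starEdge N) (· ∈ V')) ∧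
     (∀ W : Finset (Fin N), W.card = k →
        ((∀ W' : Finset (Fin N), W'.card = k →
            expectedEFSVacc β (starEdge N) (· ∈ W) ≤ expectedEFSVacc β (starEdge N) (· ∈ W'))
          ↔ (⟨0, by omega⟩ : Fin N) ∈ W))) := by
  obtain ⟨hβ0, hβ1⟩ := hβ
  have hkN : k ≤ N := by omega
  have hk2N : k + 2 ≤ N := by omega
  have hNpos : (0:ℝ) < N := by
    have : (0:ℕ) < N := by omega
    exact_mod_cast this
  have hMcast : (k:ℝ) + 2 ≤ (N:ℝ) := by exact_mod_cast hk2N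
  have hMpos : (0:ℝ) < (N:ℝ) - k := by linarith
  -- strict inequality for any size-k vaccinated set avoiding the center
  have hlt : ∀ W : Finset (Fin N), W.card = k → (⟨0, by omega⟩ : Fin N) ∉ W →
      ((N:ℝ) - k) / N < expectedEFSVacc β (starEdge N) (· ∈ W) := by
    intro W hW hcW
    rw [Stmt13Aux.valB hN hk2 β W hW hcW]
    have h1 : 0 < 2 * ((N:ℝ)-k-1) * β := by
      apply mul_pos (by linarith) hβ0
    have h2 : (0:ℝ) ≤ ((N:ℝ)-k-1) * ((N:ℝ)-k-2) * β^2 :=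
      mul_nonneg (mul_nonneg (by linarith) (by linarith)) (sq_nonneg β)
    apply div_lt_div_of_pos_right ?_ hNpos
    linarith
  refine ⟨fun hc => Stmt13Aux.valA hN hkN β V' hcard hc, fun hc => ⟨?_, ?_⟩, ?_⟩
  · rw [Stmt13Aux.valB hN hk2 β V' hcard hc]
    have hNne : (N:ℝ) ≠ 0 := ne_of_gt hNpos
    have hMne : (N:ℝ) - k ≠ 0 := ne_of_gt hMpos
    field_simp
  · exact hlt V' hcard hc
  · intro W hW
    constructor
    · intro hmin
      by_contra hcW
      obtain ⟨w, hw⟩ : W.Nonempty := Finset.card_pos.1 (by omega)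
      have hcnot : (⟨0, by omega⟩ : Fin N) ∉ W.erase w :=
        fun h => hcW (Finset.mem_of_mem_erase h)
      have hW2card : (insert (⟨0, by omega⟩ : Fin N) (W.erase w)).card = k := by
        rw [Finset.card_insert_of_notMem hcnot, Finset.card_erase_of_mem hw, hW]
        omega
      have h1 := hmin _ hW2card
      have h2 : expectedEFSVacc β (starEdge N)
          (· ∈ insert (⟨0, by omega⟩ : Fin N) (W.erase w)) = ((N:ℝ) - k) / N :=
        Stmt13Aux.valA hN hkN β _ hW2card (Finset.mem_insert_self _ _)
      have h3 := hlt W hW hcW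
      rw [h2] at h1
      linarith
    · intro hcW W' hW'
      rw [Stmt13Aux.valA hN hkN β W hW hcW]
      by_cases hcW' : (⟨0, by omega⟩ : Fin N) ∈ W'
      · rw [Stmt13Aux.valA hN hkN β W' hW' hcW']
      · exact le_of_lt (hlt W' hW' hcW')

end
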